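/- For every integer m with 1 ≤ m ≤ 199, P(X_{2m} < 0) = 1/2 - (1/2^{2m+1}) · C(2m, m), where C(2m, m) is the binomial coefficient. -/

import Mathlib

/-!
Almost surely every `C j` is `±1`, so if `a` of the first `2m` signs are `-1` the product
`∏ (1 - δ C j)` equals `1.01 ^ a * 0.99 ^ (2m - a)`, which for `m ≤ 199` exceeds `1` exactly when
`a > m`. The set of indices with `C j = -1` is uniformly distributed on the subsets of
`{1, …, 2m}`, and taking complements matches the subsets of size `> m` with those of size `< m`;
hence `P(X_{2m} < 0) = (2^{2m} - C(2m, m)) / 2^{2m+1}`.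
-/

open MeasureTheory ProbabilityTheory Finset

theorem two_mul_card_powerset_filter_lt_card_add_choose {ι : Type*} {m : ℕ} (I : Finset ι)
    (hI : #I = 2 * m) :
    2 * #{S ∈ I.powerset | m < #S} + (2 * m).choose m = 2 ^ (2 * m) := by
  classical
  have hsymm : #{S ∈ I.powerset | m < #S} = #{S ∈ I.powerset | #S < m} := by
    refine card_nbij' (I \ ·) (I \ ·) ?_ ?_ ?_ ?_ <;>
      intro S hS <;> simp only [coe_filter, Set.mem_ofPred_eq, mem_powerset] at hS ⊢
    · have := card_le_card hS.1
      exact ⟨sdiff_subset, by rw [card_sdiff_of_subset hS.1]; omega⟩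
    · exact ⟨sdiff_subset, by rw [card_sdiff_of_subset hS.1]; omega⟩
    · exact Finset.sdiff_sdiff_eq_self hS.1
    · exact Finset.sdiff_sdiff_eq_self hS.1
  have hmid : #{S ∈ I.powerset | #S = m} = (2 * m).choose m := by
    rw [← powersetCard_eq_filter, card_powersetCard, hI]
  have hgt := card_filter_add_card_filter_not (s := I.powerset) (fun S => m < #S)
  have hle := card_filter_add_card_filter_not (s := {S ∈ I.powerset | ¬m < #S}) (fun S => #S < m)
  simp only [filter_filter] at hle
  rw [filter_congr (q := fun S => #S < m) (by intro S _; omega),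
    filter_congr (p := fun S => ¬m < #S ∧ ¬#S < m) (q := fun S => #S = m)
      (by intro S _; omega)] at hle
  rw [card_powerset, hI] at hgt
  omega

theorem one_lt_pow_mul_pow_iff {a b m : ℕ} (hab : a + b = 2 * m) (hm : m ≤ 199) :
    1 < (1.01 : ℝ) ^ a * 0.99 ^ b ↔ m < a := by
  constructor
  · intro h
    by_contra! ha
    obtain ⟨k, rfl⟩ : ∃ k, b = a + k := ⟨b - a, by omega⟩
    have hdrag : (1.01 : ℝ) ^ a * 0.99 ^ (a + k) = 0.9999 ^ a * 0.99 ^ k := by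
      rw [pow_add, ← mul_assoc, ← mul_pow]; norm_num
    rw [hdrag] at h
    exact h.not_ge (mul_le_one₀ (pow_le_one₀ (by norm_num) (by norm_num)) (by positivity)
      (pow_le_one₀ (by norm_num) (by norm_num)))
  · intro ha
    obtain ⟨k, rfl⟩ : ∃ k, a = b + 2 + k := ⟨a - b - 2, by omega⟩
    have hb : b ≤ 198 := by omega
    -- Sharp: `1.01 ^ 2 * 0.9999 ^ 199 < 1`.
    calc (1 : ℝ) < 1.01 ^ 2 * 0.9999 ^ 198 := by norm_num
      _ ≤ 1.01 ^ (2 + k) * 0.9999 ^ b :=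
        mul_le_mul (pow_le_pow_right₀ (by norm_num) (by omega))
          (pow_le_pow_of_le_one (by norm_num) (by norm_num) hb) (by positivity) (by positivity)
      _ = 1.01 ^ (b + 2 + k) * 0.99 ^ b := by
        rw [show (0.9999 : ℝ) = 1.01 * 0.99 by norm_num, mul_pow]; ring

theorem prod_one_sub_mul_eq_of_sign {ι : Type*} (δ : ℝ) (I : Finset ι) {c : ι → ℝ}
    (hc : ∀ j ∈ I, c j = 1 ∨ c j = -1) :
    ∏ j ∈ I, (1 - δ * c j) = (1 + δ) ^ #{j ∈ I | c j = -1} * (1 - δ) ^ #{j ∈ I | c j ≠ -1} := by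
  rw [← prod_filter_mul_prod_filter_not I (c · = -1)]
  congr 1 <;> refine prod_eq_pow_card fun j hj => ?_ <;> obtain ⟨hjI, hj⟩ := mem_filter.1 hj
  · rw [hj]; ring
  · rw [(hc j hjI).resolve_right hj]; ring

section SignFamily

variable {Ω ι : Type*} [DecidableEq ι] [MeasurableSpace Ω] {μ : Measure Ω} {C : ι → Ω → ℝ}

def signPattern (C : ι → Ω → ℝ) (I S : Finset ι) : Set Ω :=
  {ω | ∀ j ∈ I, C j ω = if j ∈ S then -1 else 1}

noncomputable def negIndices (C : ι → Ω → ℝ) (I : Finset ι) (ω : Ω) : Finset ι :=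
  {j ∈ I | C j ω = -1}

theorem ae_eq_one_or_eq_neg_one [IsProbabilityMeasure μ] {Y : Ω → ℝ} (hY : Measurable Y)
    (hHead : μ {ω | Y ω = 1} = 1 / 2) (hTail : μ {ω | Y ω = -1} = 1 / 2) :
    ∀ᵐ ω ∂μ, Y ω = 1 ∨ Y ω = -1 := by
  have hOne : MeasurableSet {ω | Y ω = 1} := hY (measurableSet_singleton 1)
  have hNegOne : MeasurableSet {ω | Y ω = -1} := hY (measurableSet_singleton (-1))
  have hdisj : Disjoint {ω | Y ω = 1} {ω | Y ω = -1} :=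
    Set.disjoint_left.2 fun ω (h1 : Y ω = 1) (h2 : Y ω = -1) => by norm_num [h1] at h2
  change {ω | Y ω = 1 ∨ Y ω = -1} ∈ ae μ
  rw [mem_ae_iff, Set.ofPred_or, prob_compl_eq_zero_iff (hOne.union hNegOne),
    measure_union hdisj hNegOne, hHead, hTail, ENNReal.add_halves]

theorem measure_signPattern (hIndep : iIndepFun C μ) (hHead : ∀ j, μ {ω | C j ω = 1} = 1 / 2)
    (hTail : ∀ j, μ {ω | C j ω = -1} = 1 / 2) (I S : Finset ι) :
    μ (signPattern C I S) = (1 / 2) ^ #I := by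
  have h := hIndep.measure_inter_preimage_eq_mul I (sets := fun j => {if j ∈ S then -1 else 1})
    fun _ _ => measurableSet_singleton _
  convert h using 1
  · congr 1; ext ω; simp [signPattern]
  · refine (prod_eq_pow_card fun j _ => ?_).symm
    split_ifs
    exacts [hTail j, hHead j]

theorem measurableSet_signPattern (hMeas : ∀ j, Measurable (C j)) (I S : Finset ι) :
    MeasurableSet (signPattern C I S) := by
  simp only [signPattern, Set.ofPred_forall]
  exact Finset.measurableSet_biInter I fun j _ => hMeas j (measurableSet_singleton _)

theorem setOf_negIndices_eq_ae_eq_signPattern [IsProbabilityMeasure μ] (hMeas : ∀ j, Measurable (C j))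
    (hHead : ∀ j, μ {ω | C j ω = 1} = 1 / 2) (hTail : ∀ j, μ {ω | C j ω = -1} = 1 / 2)
    {I S : Finset ι} (hSI : S ⊆ I) :
    {ω | negIndices C I ω = S} =ᵐ[μ] signPattern C I S := by
  filter_upwards [(Filter.eventually_all_finset I).2 fun j _ =>
    ae_eq_one_or_eq_neg_one (hMeas j) (hHead j) (hTail j)] with ω hω
  refine propext ⟨?_, fun (h : ∀ j ∈ I, C j ω = if j ∈ S then -1 else 1) => ?_⟩
  · rintro rfl j hj
    by_cases hneg : C j ω = -1
    · simp [negIndices, hj, hneg]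
    · simp [negIndices, (hω j hj).resolve_right hneg]
  · ext j
    simp only [negIndices, mem_filter]
    refine ⟨fun ⟨hj, hneg⟩ => ?_, fun hjS => ⟨hSI hjS, by rw [h j (hSI hjS), if_pos hjS]⟩⟩
    by_contra hjS
    rw [h j hj, if_neg hjS] at hneg
    norm_num at hneg

theorem measure_setOf_negIndices [IsProbabilityMeasure μ] (hMeas : ∀ j, Measurable (C j))
    (hIndep : iIndepFun C μ) (hHead : ∀ j, μ {ω | C j ω = 1} = 1 / 2)
    (hTail : ∀ j, μ {ω | C j ω = -1} = 1 / 2) (p : Finset ι → Prop) [DecidablePred p]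
    (I : Finset ι) :
    μ {ω | p (negIndices C I ω)} = #{S ∈ I.powerset | p S} * (1 / 2) ^ #I := by
  have hunion : {ω | p (negIndices C I ω)}
      = ⋃ S ∈ {S ∈ I.powerset | p S}, {ω | negIndices C I ω = S} := by
    ext ω; simp [negIndices, filter_subset]
  have hatom : ∀ S ∈ {S ∈ I.powerset | p S},
      {ω | negIndices C I ω = S} =ᵐ[μ] signPattern C I S := fun S hS =>
    setOf_negIndices_eq_ae_eq_signPattern hMeas hHead hTail (mem_powerset.1 (mem_filter.1 hS).1)
  rw [hunion, measure_biUnion_finset₀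
      (fun S _ T _ hST => (Set.disjoint_left.2 fun ω h1 h2 => hST (h1.symm.trans h2)).aedisjoint)
      fun S hS => (measurableSet_signPattern hMeas I S).nullMeasurableSet.congr (hatom S hS).symm,
    sum_congr rfl fun S hS => (measure_congr (hatom S hS)).trans
      (measure_signPattern hIndep hHead hTail I S),
    sum_const, nsmul_eq_mul]

end SignFamily

/-- For the CPDO net capital driven by i.i.d. fair signs with `δ = 0.01`:
for every `1 ≤ m ≤ 199`, `P(X (2m) < 0) = 1/2 - (1/2^(2m+1)) · C(2m, m)`. -/
theorem cpdo_even_loss_probability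
    {Ω : Type*} [MeasureSpace Ω] [IsProbabilityMeasure (ℙ : Measure Ω)]
    (δ : ℝ) (hδ : δ = 0.01)
    (C : ℕ → Ω → ℝ)
    (hMeas : ∀ j, Measurable (C j))
    (hIndep : iIndepFun C ℙ)
    (hHead : ∀ j, ℙ {ω | C j ω = 1} = 1/2)
    (hTail : ∀ j, ℙ {ω | C j ω = -1} = 1/2)
    (X : ℕ → Ω → ℝ)
    (hX : ∀ (k : ℕ) (ω : Ω), X k ω = 1 - ∏ j ∈ Finset.Icc 1 k, (1 - δ * C j ω)) :
    ∀ m : ℕ, 1 ≤ m → m ≤ 199 →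
      (ℙ {ω | X (2 * m) ω < 0}).toReal
        = 1 / 2 - (1 / 2 ^ (2 * m + 1)) * (Nat.choose (2 * m) m : ℝ) := by
  intro m _ hm2
  subst hδ
  have hloss : {ω | X (2 * m) ω < 0} =ᵐ[ℙ] {ω | m < #(negIndices C (Icc 1 (2 * m)) ω)} := by
    filter_upwards [(Filter.eventually_all_finset _).2 fun j _ =>
      ae_eq_one_or_eq_neg_one (hMeas j) (hHead j) (hTail j)] with ω hω
    have hcard := card_filter_add_card_filter_not (s := Icc 1 (2 * m)) (C · ω = -1)
    rw [Nat.card_Icc, Nat.add_sub_cancel] at hcard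
    change (X (2 * m) ω < 0) = (m < #{j ∈ Icc 1 (2 * m) | C j ω = -1})
    rw [eq_iff_iff, hX, prod_one_sub_mul_eq_of_sign _ _ hω,
      ← one_lt_pow_mul_pow_iff hcard hm2, sub_neg]
    norm_num
  have hcount := two_mul_card_powerset_filter_lt_card_add_choose (Icc 1 (2 * m)) (m := m) (by simp)
  rw [measure_congr hloss, measure_setOf_negIndices hMeas hIndep hHead hTail (m < #·), Nat.card_Icc,
    Nat.add_sub_cancel, ENNReal.toReal_mul, ENNReal.toReal_pow]
  have hcountℝ : 2 * (#{S ∈ (Icc 1 (2 * m)).powerset | m < #S} : ℝ) + (2 * m).choose m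
      = 2 ^ (2 * m) := by exact_mod_cast hcount
  simp only [ENNReal.toReal_natCast, one_div, ENNReal.toReal_inv, ENNReal.toReal_ofNat, inv_pow]
  field_simp
  linear_combination (2 * 2 ^ (2 * m) : ℝ) * hcountℝ
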